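/- arXiv:1310.4955 — 3 statements merged into one kernel-verified Lean document; each statement's English description precedes it below -/
import Mathlib

section
/- The function λ ↦ log φ(λ) is concave on (0,∞); the function λ ↦ log( λ/φ(λ) ) is concave on (0,∞); and for every c > 0, φ(s+c)/φ(s) → 1 and ( (s+c)/φ(s+c) ) / ( s/φ(s) ) → 1 as s → ∞. In other words, both φ and φ*(λ) := λ/φ(λ) satisfy Webster's conditions: log-concavity on (0,∞) together with lim_{s→∞} g(s+c)/g(s) = 1 for every c > 0. -/
/-!
`φ` is concave on `[0, ∞)`, being `q + aλ` plus an integral of the concave functions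
`λ ↦ 1 - e^{-λx}`. A positive concave function is log-concave, and concavity between `0` and
`s + c` together with `φ 0 = q ≥ 0` squeezes `φ(s+c)/φ(s)` between `1` and `(s+c)/s`.

For `λ/φ(λ)`, write `φ(λ)/λ = q/λ + a + ∫ (∫₀ˣ e^{-λu} du) ν(dx)`. Each `λ ↦ e^{-λu}` is
log-linear, and by Hölder's inequality log-convexity is preserved by sums and integrals, so
`φ(λ)/λ` is log-convex. Finally `((s+c)/φ(s+c)) / (s/φ(s)) = ((s+c)/s) / (φ(s+c)/φ(s))`.
-/

open MeasureTheory Real Set Filter Topology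

noncomputable section

/-- For nonnegative `f` this is convexity of `log ∘ f` (with `log 0 = -∞`). It is stated without
logarithms because in this form it is preserved by sums and integrals. -/
def LogConvexOn (s : Set ℝ) (f : ℝ → ℝ) : Prop :=
  ∀ ⦃x⦄, x ∈ s → ∀ ⦃y⦄, y ∈ s → ∀ ⦃a b : ℝ⦄, 0 < a → 0 < b → a + b = 1 →
    f (a * x + b * y) ≤ f x ^ a * f y ^ b

theorem rpow_mul_rpow_add_rpow_mul_rpow_le {x₁ x₂ y₁ y₂ a b : ℝ} (hx₁ : 0 ≤ x₁)
    (hx₂ : 0 ≤ x₂) (hy₁ : 0 ≤ y₁) (hy₂ : 0 ≤ y₂) (ha : 0 < a) (hb : 0 < b) (hab : a + b = 1) :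
    x₁ ^ a * y₁ ^ b + x₂ ^ a * y₂ ^ b ≤ (x₁ + x₂) ^ a * (y₁ + y₂) ^ b := by
  have := inner_le_Lp_mul_Lq_of_nonneg Finset.univ (holderConjugate_one_div ha hb hab)
    (f := ![x₁ ^ a, x₂ ^ a]) (g := ![y₁ ^ b, y₂ ^ b])
    (by simp [Fin.forall_fin_two, rpow_nonneg, hx₁, hx₂])
    (by simp [Fin.forall_fin_two, rpow_nonneg, hy₁, hy₂])
  simpa [Fin.sum_univ_two, ← rpow_mul, hx₁, hx₂, hy₁, hy₂, ha.ne', hb.ne'] using this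

theorem integral_le_integral_rpow_mul_integral_rpow {α : Type*} [MeasurableSpace α]
    {μ : Measure α} {h f g : α → ℝ} {a b : ℝ} (hh : AEStronglyMeasurable h μ)
    (hf : Integrable f μ) (hg : Integrable g μ) (hh0 : 0 ≤ᵐ[μ] h) (hf0 : 0 ≤ᵐ[μ] f)
    (hg0 : 0 ≤ᵐ[μ] g) (ha : 0 ≤ a) (hb : 0 ≤ b) (hab : a + b = 1)
    (hle : ∀ᵐ z ∂μ, h z ≤ f z ^ a * g z ^ b) :
    ∫ z, h z ∂μ ≤ (∫ z, f z ∂μ) ^ a * (∫ z, g z ∂μ) ^ b := by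
  have hlint : ∫⁻ z, ENNReal.ofReal (h z) ∂μ ≤
      (∫⁻ z, ENNReal.ofReal (f z) ∂μ) ^ a * (∫⁻ z, ENNReal.ofReal (g z) ∂μ) ^ b := by
    refine (lintegral_mono_ae ?_).trans (ENNReal.lintegral_mul_norm_pow_le
      hf.1.aemeasurable.ennreal_ofReal hg.1.aemeasurable.ennreal_ofReal ha hb hab)
    filter_upwards [hle, hf0, hg0] with z hz hfz hgz
    rw [ENNReal.ofReal_rpow_of_nonneg hfz ha, ENNReal.ofReal_rpow_of_nonneg hgz hb,
      ← ENNReal.ofReal_mul (rpow_nonneg hfz a)]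
    exact ENNReal.ofReal_le_ofReal hz
  have hIf := integral_nonneg_of_ae hf0
  have hIg := integral_nonneg_of_ae hg0
  rw [← ofReal_integral_eq_lintegral_ofReal hf hf0,
    ← ofReal_integral_eq_lintegral_ofReal hg hg0, ENNReal.ofReal_rpow_of_nonneg hIf ha,
    ENNReal.ofReal_rpow_of_nonneg hIg hb,
    ← ENNReal.ofReal_mul (rpow_nonneg hIf a)] at hlint
  rw [integral_eq_lintegral_of_nonneg_ae hh0 hh]
  exact ENNReal.toReal_le_of_le_ofReal (by positivity) hlint

namespace LogConvexOn

variable {s : Set ℝ} {f g : ℝ → ℝ}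

theorem congr (hs : Convex ℝ s) (hf : LogConvexOn s f) (hfg : EqOn f g s) :
    LogConvexOn s g := by
  intro x hx y hy a b ha hb hab
  have hw : a * x + b * y ∈ s := hs hx hy ha.le hb.le hab
  rw [← hfg hx, ← hfg hy, ← hfg hw]
  exact hf hx hy ha hb hab

theorem add (hf : LogConvexOn s f) (hg : LogConvexOn s g) (hf0 : ∀ x ∈ s, 0 ≤ f x)
    (hg0 : ∀ x ∈ s, 0 ≤ g x) : LogConvexOn s (fun x => f x + g x) :=
  fun _ hx _ hy _ _ ha hb hab => (add_le_add (hf hx hy ha hb hab) (hg hx hy ha hb hab)).trans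
    (rpow_mul_rpow_add_rpow_mul_rpow_le (hf0 _ hx) (hg0 _ hx) (hf0 _ hy) (hg0 _ hy) ha hb hab)

theorem integral {α : Type*} [MeasurableSpace α] {μ : Measure α} {F : ℝ → α → ℝ}
    (hs : Convex ℝ s) (hint : ∀ l ∈ s, Integrable (F l) μ) (hF0 : ∀ l ∈ s, 0 ≤ᵐ[μ] F l)
    (hF : ∀ᵐ z ∂μ, LogConvexOn s (F · z)) : LogConvexOn s (fun l => ∫ z, F l z ∂μ) := by
  intro x hx y hy a b ha hb hab
  have hw : a * x + b * y ∈ s := hs hx hy ha.le hb.le hab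
  exact integral_le_integral_rpow_mul_integral_rpow (hint _ hw).1 (hint x hx) (hint y hy)
    (hF0 _ hw) (hF0 x hx) (hF0 y hy) ha.le hb.le hab
    (hF.mono fun z hz => hz hx hy ha hb hab)

theorem convexOn_log (hs : Convex ℝ s) (hf : LogConvexOn s f) (hpos : ∀ x ∈ s, 0 < f x) :
    ConvexOn ℝ s (fun x => log (f x)) := by
  refine convexOn_iff_forall_pos.2 ⟨hs, fun x hx y hy a b ha hb hab => ?_⟩
  have hw : a * x + b * y ∈ s := hs hx hy ha.le hb.le hab
  calc log (f (a * x + b * y)) ≤ log (f x ^ a * f y ^ b) :=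
        log_le_log (hpos _ hw) (hf hx hy ha hb hab)
    _ = a * log (f x) + b * log (f y) := by
        rw [log_mul (rpow_pos_of_pos (hpos x hx) a).ne' (rpow_pos_of_pos (hpos y hy) b).ne',
          log_rpow (hpos x hx), log_rpow (hpos y hy)]

end LogConvexOn

theorem logConvexOn_const {s : Set ℝ} {c : ℝ} (hc : 0 ≤ c) : LogConvexOn s (fun _ => c) :=
  fun _ _ _ _ a b _ _ hab => by rw [← rpow_add' hc (hab ▸ one_ne_zero), hab, rpow_one]

theorem logConvexOn_const_div {c : ℝ} (hc : 0 ≤ c) : LogConvexOn (Ioi 0) (fun l => c / l) := by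
  intro x hx y hy a b ha hb hab
  have hx : 0 < x := hx
  have hy : 0 < y := hy
  calc c / (a * x + b * y) ≤ c / (x ^ a * y ^ b) :=
        div_le_div_of_nonneg_left hc (by positivity)
          (geom_mean_le_arith_mean2_weighted ha.le hb.le hx.le hy.le hab)
    _ = (c / x) ^ a * (c / y) ^ b := by
        rw [div_rpow hc hx.le, div_rpow hc hy.le, div_mul_div_comm,
          ← rpow_add' hc (hab ▸ one_ne_zero), hab, rpow_one]

theorem logConvexOn_exp_neg_mul {s : Set ℝ} (u : ℝ) : LogConvexOn s (fun l => exp (-(l * u))) :=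
  fun x _ y _ a b _ _ _ => by
    rw [← exp_mul, ← exp_mul, ← exp_add]
    exact le_of_eq (congrArg exp (by ring))

theorem setIntegral_Ioc_exp_neg_mul {l : ℝ} (hl : l ≠ 0) {z : ℝ} (hz : 0 ≤ z) :
    ∫ u in Ioc 0 z, exp (-(l * u)) = (1 - exp (-(l * z))) / l := by
  rw [← intervalIntegral.integral_of_le hz,
    intervalIntegral.integral_comp_mul_left (fun v => exp (-v)) hl,
    intervalIntegral.integral_comp_neg, integral_exp]
  simp [div_eq_inv_mul]

theorem logConvexOn_one_sub_exp_neg_mul_div {z : ℝ} (hz : 0 ≤ z) :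
    LogConvexOn (Ioi 0) (fun l => (1 - exp (-(l * z))) / l) := by
  have hcont (l : ℝ) : Continuous fun u => exp (-(l * u)) := by fun_prop
  exact (LogConvexOn.integral (μ := volume.restrict (Ioc 0 z)) (convex_Ioi 0)
    (fun l _ => (hcont l).integrableOn_Ioc) (fun _ _ => ae_of_all _ fun _ => (exp_pos _).le)
    (ae_of_all _ logConvexOn_exp_neg_mul)).congr (convex_Ioi 0)
    fun l hl => setIntegral_Ioc_exp_neg_mul (ne_of_gt hl) hz

theorem ConcaveOn.log_of_pos {s : Set ℝ} {f : ℝ → ℝ} (hf : ConcaveOn ℝ s f)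
    (hpos : ∀ x ∈ s, 0 < f x) : ConcaveOn ℝ s (fun x => log (f x)) := by
  refine ⟨hf.1, fun x hx y hy a b ha hb hab => ?_⟩
  have hmem : a • f x + b • f y ∈ Ioi 0 := convex_Ioi 0 (hpos x hx) (hpos y hy) ha hb hab
  calc a • log (f x) + b • log (f y) ≤ log (a • f x + b • f y) :=
        strictConcaveOn_log_Ioi.concaveOn.2 (hpos x hx) (hpos y hy) ha hb hab
    _ ≤ log (f (a • x + b • y)) := log_le_log hmem (hf.2 hx hy ha hb hab)

theorem concaveOn_integral {E α : Type*} [AddCommGroup E] [Module ℝ E] [MeasurableSpace α]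
    {μ : Measure α} {s : Set E} {F : E → α → ℝ} (hs : Convex ℝ s)
    (hint : ∀ l ∈ s, Integrable (F l) μ) (hF : ∀ᵐ z ∂μ, ConcaveOn ℝ s (F · z)) :
    ConcaveOn ℝ s (fun l => ∫ z, F l z ∂μ) := by
  refine ⟨hs, fun x hx y hy a b ha hb hab => ?_⟩
  have hcomb : Integrable (fun z => a • F x z + b • F y z) μ :=
    ((hint x hx).smul a).add ((hint y hy).smul b)
  calc a • ∫ z, F x z ∂μ + b • ∫ z, F y z ∂μ = ∫ z, (a • F x z + b • F y z) ∂μ := by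
        rw [← integral_smul, ← integral_smul, ← integral_add]
        exacts [(hint x hx).smul a, (hint y hy).smul b]
    _ ≤ ∫ z, F (a • x + b • y) z ∂μ :=
        integral_mono_ae hcomb (hint _ (hs hx hy ha hb hab))
          (hF.mono fun z hz => hz.2 hx hy ha hb hab)

theorem one_sub_exp_neg_mul_nonneg {l z : ℝ} (hl : 0 ≤ l) (hz : 0 ≤ z) :
    0 ≤ 1 - exp (-(l * z)) :=
  sub_nonneg.2 (exp_le_one_iff.2 (neg_nonpos.2 (mul_nonneg hl hz)))

theorem one_sub_exp_neg_mul_le {l z : ℝ} (hz : 0 ≤ z) :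
    1 - exp (-(l * z)) ≤ max l 1 * min z 1 := by
  rcases le_total z 1 with hz1 | hz1
  · calc 1 - exp (-(l * z)) ≤ l * z := by linarith [add_one_le_exp (-(l * z))]
      _ ≤ max l 1 * min z 1 := by
        rw [min_eq_left hz1]; exact mul_le_mul_of_nonneg_right (le_max_left l 1) hz
  · calc 1 - exp (-(l * z)) ≤ 1 := by linarith [exp_pos (-(l * z))]
      _ ≤ max l 1 * min z 1 := by rw [min_eq_right hz1, mul_one]; exact le_max_right l 1

theorem concaveOn_one_sub_exp_neg_mul (z : ℝ) :
    ConcaveOn ℝ univ (fun l => 1 - exp (-(l * z))) := by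
  refine ⟨convex_univ, fun x _ y _ a b ha hb hab => ?_⟩
  have hexp := convexOn_exp.2 (mem_univ (-(x * z))) (mem_univ (-(y * z))) ha hb hab
  simp only [smul_eq_mul] at hexp ⊢
  rw [show a * -(x * z) + b * -(y * z) = -((a * x + b * y) * z) by ring] at hexp
  linear_combination hexp + hab

def bernsteinFunction (q a : ℝ) (ν : Measure ℝ) (l : ℝ) : ℝ :=
  q + a * l + ∫ x, (1 - exp (-(l * x))) ∂ν

section BernsteinFunction

variable {q a : ℝ} {ν : Measure ℝ}

theorem bernsteinFunction_zero : bernsteinFunction q a ν 0 = q := by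
  simp [bernsteinFunction]

theorem ae_pos_of_measure_Iic_eq_zero (hν0 : ν (Iic 0) = 0) : ∀ᵐ z ∂ν, 0 < z :=
  ae_iff.2 (measure_mono_null (fun _ hz => not_lt.1 hz) hν0)

theorem integrable_one_sub_exp_neg_mul (hν0 : ν (Iic 0) = 0)
    (hνint : ∫⁻ x, ENNReal.ofReal (min x 1) ∂ν < ⊤) {l : ℝ} (hl : 0 ≤ l) :
    Integrable (fun z => 1 - exp (-(l * z))) ν := by
  have hpos := ae_pos_of_measure_Iic_eq_zero hν0
  have hmin : Integrable (fun z : ℝ => min z 1) ν :=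
    ⟨(measurable_id.min measurable_const).aestronglyMeasurable,
      (hasFiniteIntegral_iff_ofReal (hpos.mono fun z hz => le_min hz.le zero_le_one)).2 hνint⟩
  refine (hmin.const_mul (max l 1)).mono' (by fun_prop) (hpos.mono fun z hz => ?_)
  rw [norm_of_nonneg (one_sub_exp_neg_mul_nonneg hl hz.le)]
  exact one_sub_exp_neg_mul_le hz.le

theorem concaveOn_bernsteinFunction (hν0 : ν (Iic 0) = 0)
    (hνint : ∫⁻ x, ENNReal.ofReal (min x 1) ∂ν < ⊤) :
    ConcaveOn ℝ (Ici 0) (bernsteinFunction q a ν) :=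
  ((concaveOn_const q (convex_Ici 0)).add ((LinearMap.mul ℝ ℝ a).concaveOn (convex_Ici 0))).add
    (concaveOn_integral (convex_Ici 0) (fun _ hl => integrable_one_sub_exp_neg_mul hν0 hνint hl)
      (ae_of_all _ fun z =>
        (concaveOn_one_sub_exp_neg_mul z).subset (subset_univ _) (convex_Ici 0)))

theorem monotoneOn_bernsteinFunction (ha : 0 ≤ a) (hν0 : ν (Iic 0) = 0)
    (hνint : ∫⁻ x, ENNReal.ofReal (min x 1) ∂ν < ⊤) :
    MonotoneOn (bernsteinFunction q a ν) (Ici 0) := by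
  intro x hx y hy hxy
  have hint : ∫ z, (1 - exp (-(x * z))) ∂ν ≤ ∫ z, (1 - exp (-(y * z))) ∂ν :=
    integral_mono_ae (integrable_one_sub_exp_neg_mul hν0 hνint hx)
      (integrable_one_sub_exp_neg_mul hν0 hνint hy)
      ((ae_pos_of_measure_Iic_eq_zero hν0).mono fun z hz =>
        sub_le_sub_left (exp_le_exp.2 (neg_le_neg (mul_le_mul_of_nonneg_right hxy hz.le))) 1)
  unfold bernsteinFunction
  gcongr

theorem logConvexOn_bernsteinFunction_div (hq : 0 ≤ q) (ha : 0 ≤ a) (hν0 : ν (Iic 0) = 0)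
    (hνint : ∫⁻ x, ENNReal.ofReal (min x 1) ∂ν < ⊤) :
    LogConvexOn (Ioi 0) (fun l => bernsteinFunction q a ν l / l) := by
  have hpos := ae_pos_of_measure_Iic_eq_zero hν0
  have hK0 : ∀ l ∈ Ioi (0 : ℝ), 0 ≤ᵐ[ν] fun z => (1 - exp (-(l * z))) / l := fun l hl =>
    hpos.mono fun _ hz =>
      div_nonneg (one_sub_exp_neg_mul_nonneg (le_of_lt hl) hz.le) (le_of_lt hl)
  have hK : LogConvexOn (Ioi 0) (fun l => ∫ z, (1 - exp (-(l * z))) / l ∂ν) :=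
    LogConvexOn.integral (convex_Ioi 0)
      (fun l hl => (integrable_one_sub_exp_neg_mul hν0 hνint (le_of_lt hl)).div_const l) hK0
      (hpos.mono fun z hz => logConvexOn_one_sub_exp_neg_mul_div hz.le)
  have hqa : LogConvexOn (Ioi 0) (fun l => q / l + a) :=
    (logConvexOn_const_div hq).add (logConvexOn_const ha)
      (fun l hl => div_nonneg hq (le_of_lt hl)) fun _ _ => ha
  refine (hqa.add hK (fun l hl => add_nonneg (div_nonneg hq (le_of_lt hl)) ha)
    fun l hl => integral_nonneg_of_ae (hK0 l hl)).congr (convex_Ioi 0) fun l hl => ?_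
  simp only [bernsteinFunction, integral_div, add_div, mul_div_cancel_right₀ a (ne_of_gt hl)]

end BernsteinFunction

theorem tendsto_add_const_div_self_atTop (c : ℝ) :
    Tendsto (fun s : ℝ => (s + c) / s) atTop (𝓝 1) := by
  have h : Tendsto (fun s : ℝ => 1 + c * s⁻¹) atTop (𝓝 (1 + c * 0)) :=
    tendsto_const_nhds.add (tendsto_inv_atTop_zero.const_mul c)
  rw [mul_zero, add_zero] at h
  refine h.congr' ((eventually_gt_atTop 0).mono fun s hs => ?_)
  field_simp

theorem ConcaveOn.tendsto_div_add_const_atTop {f : ℝ → ℝ} (hf : ConcaveOn ℝ (Ici 0) f)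
    (hmono : MonotoneOn f (Ici 0)) (h0 : 0 ≤ f 0) (hpos : ∀ x > 0, 0 < f x) {c : ℝ}
    (hc : 0 < c) : Tendsto (fun s => f (s + c) / f s) atTop (𝓝 1) := by
  refine tendsto_of_tendsto_of_tendsto_of_le_of_le' tendsto_const_nhds
    (tendsto_add_const_div_self_atTop c) ?_ ?_
  · filter_upwards [eventually_gt_atTop 0] with s hs
    rw [one_le_div (hpos s hs)]
    exact hmono (mem_Ici.2 hs.le) (mem_Ici.2 (by linarith)) (by linarith)
  · filter_upwards [eventually_gt_atTop 0] with s hs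
    have hsc : 0 < s + c := by linarith
    have hconc := hf.2 (mem_Ici.2 le_rfl) (mem_Ici.2 hsc.le) (div_pos hc hsc).le
      (div_pos hs hsc).le (by field_simp; ring)
    simp only [smul_eq_mul, mul_zero, zero_add] at hconc
    rw [div_mul_cancel₀ s hsc.ne'] at hconc
    rw [div_le_div_iff₀ (hpos s hs) hs]
    have hf0 : 0 ≤ c / (s + c) * f 0 := mul_nonneg (div_pos hc hsc).le h0
    calc f (s + c) * s = (s + c) * (s / (s + c) * f (s + c)) := by field_simp
      _ ≤ (s + c) * f s := mul_le_mul_of_nonneg_left (by linarith) hsc.le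

theorem stmt8_general
    (q a : ℝ) (hq : 0 ≤ q) (ha : 0 ≤ a)
    (ν : Measure ℝ) (hν0 : ν (Set.Iic 0) = 0)
    (hνint : ∫⁻ x, ENNReal.ofReal (min x 1) ∂ν < ⊤)
    (φ : ℝ → ℝ)
    (hφ : ∀ l : ℝ, 0 ≤ l → φ l = q + a * l + ∫ x, (1 - Real.exp (-(l * x))) ∂ν)
    (hφpos : ∀ l : ℝ, 0 < l → 0 < φ l) :
    ConcaveOn ℝ (Set.Ioi 0) (fun l => Real.log (φ l)) ∧
    ConcaveOn ℝ (Set.Ioi 0) (fun l => Real.log (l / φ l)) ∧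
    (∀ c : ℝ, 0 < c →
      Tendsto (fun s => φ (s + c) / φ s) atTop (𝓝 1)) ∧
    (∀ c : ℝ, 0 < c →
      Tendsto (fun s => ((s + c) / φ (s + c)) / (s / φ s)) atTop (𝓝 1)) := by
  have hφeq : EqOn (bernsteinFunction q a ν) φ (Ici 0) := fun l hl => (hφ l hl).symm
  have hconc : ConcaveOn ℝ (Ici 0) φ := (concaveOn_bernsteinFunction hν0 hνint).congr hφeq
  have hlim : ∀ c : ℝ, 0 < c → Tendsto (fun s => φ (s + c) / φ s) atTop (𝓝 1) :=
    fun c hc => hconc.tendsto_div_add_const_atTop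
      ((monotoneOn_bernsteinFunction ha hν0 hνint).congr hφeq)
      (by rw [← hφeq self_mem_Ici, bernsteinFunction_zero]; exact hq) hφpos hc
  refine ⟨(hconc.subset Ioi_subset_Ici_self (convex_Ioi 0)).log_of_pos hφpos, ?_, hlim,
    fun c hc => ?_⟩
  · refine ((logConvexOn_bernsteinFunction_div hq ha hν0 hνint).convexOn_log (convex_Ioi 0)
      fun l hl => ?_).neg.congr fun l hl => ?_
    · rw [hφeq (Ioi_subset_Ici_self hl)]
      exact div_pos (hφpos l hl) hl
    · rw [Pi.neg_apply, hφeq (Ioi_subset_Ici_self hl), ← log_inv, inv_div]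
  · have h := (tendsto_add_const_div_self_atTop c).div (hlim c hc) one_ne_zero
    rw [div_one] at h
    exact h.congr fun s => div_div_div_comm _ _ _ _

/-- both `φ` and `φ*(λ) = λ/φ(λ)` satisfy Webster's conditions:
log-concavity on `(0,∞)` and `g(s+c)/g(s) → 1` as `s → ∞`, for every `c > 0`. -/
theorem stmt8
    (q a : ℝ) (hq : 0 ≤ q) (ha : 0 ≤ a)
    (ν : Measure ℝ) (hν0 : ν (Set.Iic 0) = 0)
    (hνint : ∫⁻ x, ENNReal.ofReal (min x 1) ∂ν < ⊤)
    (hnz : ¬(q = 0 ∧ a = 0 ∧ ν = 0))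
    (φ : ℝ → ℝ)
    (hφ : ∀ l : ℝ, 0 ≤ l → φ l = q + a * l + ∫ x, (1 - Real.exp (-(l * x))) ∂ν)
    (hφpos : ∀ l : ℝ, 0 < l → 0 < φ l)
    (hφdiff : ∀ l : ℝ, 0 < l → DifferentiableAt ℝ φ l) :
    ConcaveOn ℝ (Set.Ioi 0) (fun l => Real.log (φ l)) ∧
    ConcaveOn ℝ (Set.Ioi 0) (fun l => Real.log (l / φ l)) ∧
    (∀ c : ℝ, 0 < c →
      Tendsto (fun s => φ (s + c) / φ s) atTop (𝓝 1)) ∧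
    (∀ c : ℝ, 0 < c →
      Tendsto (fun s => ((s + c) / φ (s + c)) / (s / φ s)) atTop (𝓝 1)) :=
  stmt8_general q a hq ha ν hν0 hνint φ hφ hφpos
end
end

section
/- For every Borel set A ⊆ (0,∞): ∫_A x H(dx) = a · V(A) + ∫_[0,∞) ∫_(0,∞) 1_A(x+y) · y Π(dy) V(dx); that is, on (0,∞) the measure x H(dx) equals a V(dx) plus the convolution of the measure y Π(dy) with V. In particular, when a = 0, x H(dx) = ∫_{[0,x]} Π(dy) y V(dx−y). -/
/-!
Both sides are measures on `ℝ`: `x H(dx)` and `a V + V ∗ (y Π(dy))`. Their Laplace transforms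
agree, because differentiating under the integral sign gives `φ' λ = a + ∫ y e^{-λy} Π(dy)` and
the transform of a convolution is the product of the transforms, so both equal `φ'/φ`. A measure
is determined by its Laplace transform on `(0,∞)`: weighted by `e^{-x}` it becomes a finite measure
whose moment generating function is finite on `(-1, 1)`, so by analytic continuation its
characteristic function is determined.
-/

open MeasureTheory ProbabilityTheory Real Set Filter Topology

namespace MeasureTheory.Measure

theorem ext_of_mgf_eqOn_Ioo {μ₁ μ₂ : Measure ℝ} [IsFiniteMeasure μ₁] [IsFiniteMeasure μ₂]
    {a b : ℝ} (ha : a < 0) (hb : 0 < b)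
    (h₁ : Ioo a b ⊆ integrableExpSet id μ₁) (h₂ : Ioo a b ⊆ integrableExpSet id μ₂)
    (h : EqOn (mgf id μ₁) (mgf id μ₂) (Ioo a b)) : μ₁ = μ₂ := by
  set U : Set ℂ := {z | z.re ∈ Ioo a b}
  have hU : IsPreconnected U := ((convex_Ioo a b).linear_preimage Complex.reLm).isPreconnected
  have hanalytic (μ : Measure ℝ) (hμ : Ioo a b ⊆ integrableExpSet id μ) :
      AnalyticOnNhd ℂ (complexMGF id μ) U :=
    analyticOnNhd_complexMGF.mono fun z hz ↦ interior_maximal hμ isOpen_Ioo hz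
  have h0 : (0 : ℂ) ∈ U := by simp [U, ha, hb]
  have hreal : ∃ᶠ x : ℝ in 𝓝[≠] 0, complexMGF id μ₁ x = complexMGF id μ₂ x := by
    refine Eventually.frequently ?_
    filter_upwards [nhdsWithin_le_nhds (Ioo_mem_nhds ha hb)] with x hx
    rw [complexMGF_ofReal, complexMGF_ofReal, h hx]
  have hEq := (hanalytic μ₁ h₁).eqOn_of_preconnected_of_frequently_eq (hanalytic μ₂ h₂) hU h0
    (Filter.frequently_map.2 hreal |>.filter_mono ?_)
  · refine ext_of_charFun (funext fun t ↦ ?_)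
    rw [← complexMGF_id_mul_I, ← complexMGF_id_mul_I]
    exact hEq (by simp [U, ha, hb])
  · exact Complex.continuous_ofReal.continuousWithinAt.tendsto_nhdsWithin
      (fun x hx ↦ by simpa using hx)

theorem lintegral_exp_mul_withDensity_exp_neg (μ : Measure ℝ) (t : ℝ) :
    ∫⁻ x, ENNReal.ofReal (exp (t * x)) ∂μ.withDensity (fun x ↦ ENNReal.ofReal (exp (-x)))
      = ∫⁻ x, ENNReal.ofReal (exp (-((1 - t) * x))) ∂μ := by
  rw [lintegral_withDensity_eq_lintegral_mul _ (by fun_prop) (by fun_prop)]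
  congr 1 with x
  rw [Pi.mul_apply, ← ENNReal.ofReal_mul (exp_nonneg _), ← exp_add]
  ring_nf

theorem ext_of_lintegral_exp_neg_mul_eq {μ₁ μ₂ : Measure ℝ}
    (hfin : ∀ l, 0 < l → ∫⁻ x, ENNReal.ofReal (exp (-(l * x))) ∂μ₁ ≠ ⊤)
    (h : ∀ l, 0 < l → ∫⁻ x, ENNReal.ofReal (exp (-(l * x))) ∂μ₁
      = ∫⁻ x, ENNReal.ofReal (exp (-(l * x))) ∂μ₂) : μ₁ = μ₂ := by
  set w : ℝ → ENNReal := fun x ↦ ENNReal.ofReal (exp (-x))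
  have hfin₂ : ∀ l, 0 < l → ∫⁻ x, ENNReal.ofReal (exp (-(l * x))) ∂μ₂ ≠ ⊤ :=
    fun l hl ↦ h l hl ▸ hfin l hl
  have hfinite (μ : Measure ℝ) (hμ : ∀ l, 0 < l → ∫⁻ x, ENNReal.ofReal (exp (-(l * x))) ∂μ ≠ ⊤) :
      IsFiniteMeasure (μ.withDensity w) := by
    refine ⟨?_⟩
    simpa [w, lintegral_exp_mul_withDensity_exp_neg] using (hμ 1 one_pos).lt_top
  have hint (μ : Measure ℝ) (hμ : ∀ l, 0 < l → ∫⁻ x, ENNReal.ofReal (exp (-(l * x))) ∂μ ≠ ⊤) :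
      Ioo (-1) 1 ⊆ integrableExpSet id (μ.withDensity w) := fun t ht ↦
    ⟨by fun_prop, (hasFiniteIntegral_iff_ofReal (ae_of_all _ fun x ↦ (exp_pos _).le)).2 <| by
      simpa [w, lintegral_exp_mul_withDensity_exp_neg] using (hμ (1 - t) (by linarith [ht.2])).lt_top⟩
  have hmgf : EqOn (mgf id (μ₁.withDensity w)) (mgf id (μ₂.withDensity w)) (Ioo (-1) 1) := by
    intro t ht
    simp only [mgf, id]
    rw [integral_eq_lintegral_of_nonneg_ae (ae_of_all _ fun x ↦ (exp_pos _).le) (by fun_prop),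
      integral_eq_lintegral_of_nonneg_ae (ae_of_all _ fun x ↦ (exp_pos _).le) (by fun_prop),
      lintegral_exp_mul_withDensity_exp_neg, lintegral_exp_mul_withDensity_exp_neg,
      h _ (by linarith [ht.2])]
  have := hfinite μ₁ hfin
  have := hfinite μ₂ hfin₂
  have hw : Measurable w := by fun_prop
  have hw0 : ∀ x, w x ≠ 0 := fun x ↦ by simp [w, exp_pos]
  rw [← withDensity_inv_same hw (ae_of_all μ₁ hw0) (ae_of_all _ fun _ ↦ ENNReal.ofReal_ne_top),
    ← withDensity_inv_same hw (ae_of_all μ₂ hw0) (ae_of_all _ fun _ ↦ ENNReal.ofReal_ne_top),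
    ext_of_mgf_eqOn_Ioo (by norm_num) one_pos (hint μ₁ hfin) (hint μ₂ hfin₂) hmgf]

theorem lintegral_exp_neg_mul_conv (μ ν : Measure ℝ) [SFinite ν] (l : ℝ) :
    ∫⁻ z, ENNReal.ofReal (exp (-(l * z))) ∂(μ ∗ ν)
      = (∫⁻ x, ENNReal.ofReal (exp (-(l * x))) ∂μ) * ∫⁻ y, ENNReal.ofReal (exp (-(l * y))) ∂ν := by
  rw [lintegral_conv (by fun_prop), ← lintegral_mul_const _ (by fun_prop)]
  congr 1 with x
  rw [← lintegral_const_mul _ (by fun_prop)]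
  congr 1 with y
  rw [← ENNReal.ofReal_mul (exp_nonneg _), ← exp_add]
  ring_nf

theorem conv_withDensity_ofReal_id_apply (μ ν : Measure ℝ) [SFinite ν] {A : Set ℝ}
    (hA : MeasurableSet A) :
    (μ ∗ ν.withDensity (fun y ↦ ENNReal.ofReal y)) A
      = ∫⁻ x, ∫⁻ y, A.indicator (fun _ ↦ ENNReal.ofReal y) (x + y) ∂ν ∂μ := by
  rw [← lintegral_indicator_one hA, lintegral_conv (measurable_one.indicator hA)]
  congr 1 with x
  rw [lintegral_withDensity_eq_lintegral_mul _ (by fun_prop) (g := fun y ↦ A.indicator 1 (x + y))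
    ((measurable_one.indicator hA).comp (measurable_const_add x))]
  congr 1 with y
  by_cases h : x + y ∈ A <;> simp [h]

end MeasureTheory.Measure

namespace MeasureTheory

theorem lintegral_withDensity_ofReal_id {μ : Measure ℝ} {g : ℝ → ℝ} (hg : Measurable g)
    (hg0 : ∀ x, 0 ≤ g x) :
    ∫⁻ x, ENNReal.ofReal (g x) ∂μ.withDensity (fun x ↦ ENNReal.ofReal x)
      = ∫⁻ x, ENNReal.ofReal (x * g x) ∂μ := by
  rw [lintegral_withDensity_eq_lintegral_mul _ (by fun_prop) (by fun_prop)]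
  simp only [Pi.mul_apply, ENNReal.ofReal_mul' (hg0 _)]

theorem sigmaFinite_of_lintegral_ne_top {α : Type*} [MeasurableSpace α] {μ : Measure α}
    {f : α → ENNReal} (hf : Measurable f) (hf0 : ∀ᵐ x ∂μ, f x ≠ 0) (hfin : ∫⁻ x, f x ∂μ ≠ ⊤) :
    SigmaFinite μ := by
  have : IsFiniteMeasure (μ.withDensity f) := isFiniteMeasure_withDensity hfin
  have : SigmaFinite ((μ.withDensity f).withDensity fun x ↦ (f x)⁻¹) :=
    SigmaFinite.withDensity_of_ne_top <|
      (withDensity_absolutelyContinuous μ f).ae_le (hf0.mono fun _ ↦ ENNReal.inv_ne_top.2)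
  rwa [withDensity_inv_same hf hf0 ((ae_lt_top hf hfin).mono fun _ ↦ ne_of_lt)] at this

end MeasureTheory

namespace Real

theorem mul_exp_neg_mul_le {x s : ℝ} (hx : 0 ≤ x) (hs : 0 < s) :
    x * exp (-(s * x)) ≤ max 1 s⁻¹ * min x 1 := by
  have hsx : 0 ≤ s * x := mul_nonneg hs.le hx
  rcases le_total x 1 with hx1 | hx1
  · rw [min_eq_left hx1]
    calc x * exp (-(s * x)) ≤ x := mul_le_of_le_one_right hx (exp_le_one_iff.2 (by linarith))
      _ ≤ max 1 s⁻¹ * x := le_mul_of_one_le_left hx (le_max_left _ _)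
  · rw [min_eq_right hx1, mul_one, exp_neg, ← div_eq_mul_inv]
    calc x / exp (s * x) ≤ s⁻¹ := by
          rw [div_le_iff₀ (exp_pos _), inv_mul_eq_div, le_div_iff₀' hs]
          linarith [add_one_le_exp (s * x)]
      _ ≤ max 1 s⁻¹ := le_max_right _ _

theorem one_sub_exp_neg_mul_le {x : ℝ} (hx : 0 ≤ x) (s : ℝ) :
    1 - exp (-(s * x)) ≤ max s 1 * min x 1 := by
  rcases le_total x 1 with hx1 | hx1
  · rw [min_eq_left hx1]
    calc 1 - exp (-(s * x)) ≤ s * x := by linarith [add_one_le_exp (-(s * x))]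
      _ ≤ max s 1 * x := mul_le_mul_of_nonneg_right (le_max_left _ _) hx
  · rw [min_eq_right hx1, mul_one]
    linarith [exp_pos (-(s * x)), le_max_right s 1]

end Real

theorem hasDerivAt_integral_one_sub_exp_neg_mul {ν : Measure ℝ} (hν0 : ∀ᵐ x ∂ν, 0 ≤ x)
    (hν : Integrable (fun x ↦ min x 1) ν) {l : ℝ} (hl : 0 < l) :
    Integrable (fun x ↦ x * exp (-(l * x))) ν ∧
      HasDerivAt (fun s ↦ ∫ x, 1 - exp (-(s * x)) ∂ν) (∫ x, x * exp (-(l * x)) ∂ν) l := by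
  have hl2 : 0 < l / 2 := half_pos hl
  refine hasDerivAt_integral_of_dominated_loc_of_deriv_le
    (F := fun s x ↦ 1 - exp (-(s * x))) (F' := fun s x ↦ x * exp (-(s * x)))
    (bound := fun x ↦ max 1 (l / 2)⁻¹ * min x 1) (Ioi_mem_nhds (half_lt_self hl))
    (Eventually.of_forall fun s ↦ by fun_prop) ?_ (by fun_prop) ?_ (hν.const_mul _) ?_
  · refine (hν.const_mul (max l 1)).mono' (by fun_prop) ?_
    filter_upwards [hν0] with x hx
    have : exp (-(l * x)) ≤ 1 := exp_le_one_iff.2 (neg_nonpos.2 (mul_nonneg hl.le hx))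
    rw [Real.norm_eq_abs, abs_of_nonneg (by linarith)]
    exact one_sub_exp_neg_mul_le hx l
  · filter_upwards [hν0] with x hx s (hs : l / 2 < s)
    rw [Real.norm_eq_abs, abs_of_nonneg (by positivity)]
    refine (mul_exp_neg_mul_le hx (hl2.trans hs)).trans ?_
    gcongr
  · refine ae_of_all _ fun x s _ ↦ ?_
    simpa [mul_comm] using (hasDerivAt_mul_const (x := s) x).neg.exp.const_sub 1

theorem hasDerivAt_bernstein_of_eq {q a : ℝ} {ν : Measure ℝ} {φ : ℝ → ℝ} (hν0 : ∀ᵐ x ∂ν, 0 ≤ x)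
    (hν : Integrable (fun x ↦ min x 1) ν)
    (hφ : ∀ l : ℝ, 0 ≤ l → φ l = q + a * l + ∫ x, (1 - exp (-(l * x))) ∂ν) {l : ℝ} (hl : 0 < l) :
    HasDerivAt φ (a + ∫ x, x * exp (-(l * x)) ∂ν) l := by
  have h := (((hasDerivAt_id l).const_mul a).const_add q).add
    (hasDerivAt_integral_one_sub_exp_neg_mul hν0 hν hl).2
  simp only [id, mul_one] at h
  exact h.congr_of_eventuallyEq <|
    eventually_of_mem (Ioi_mem_nhds hl) fun s hs ↦ hφ s (le_of_lt hs)

theorem stmt15_general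
    (q a : ℝ) (ha : 0 ≤ a)
    (ν : Measure ℝ) (hν0 : ν (Set.Iic 0) = 0)
    (hνint : ∫⁻ x, ENNReal.ofReal (min x 1) ∂ν < ⊤)
    (φ : ℝ → ℝ)
    (hφ : ∀ l : ℝ, 0 ≤ l → φ l = q + a * l + ∫ x, (1 - Real.exp (-(l * x))) ∂ν)
    (V : Measure ℝ)
    (hV : ∀ l : ℝ, 0 < l →
      ∫⁻ x, ENNReal.ofReal (Real.exp (-(l * x))) ∂V = ENNReal.ofReal (1 / φ l))
    (H : Measure ℝ)
    (hH : ∀ l : ℝ, 0 < l →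
      ∫⁻ x, ENNReal.ofReal (x * Real.exp (-(l * x))) ∂H
        = ENNReal.ofReal (deriv φ l / φ l)) :
    ∀ A : Set ℝ, MeasurableSet A → A ⊆ Set.Ioi 0 →
      (H.withDensity fun x => ENNReal.ofReal x) A
        = ENNReal.ofReal a * V A +
          ∫⁻ x, ∫⁻ y, A.indicator (fun _ => ENNReal.ofReal y) (x + y) ∂ν ∂V := by
  intro A hA _
  have hν_pos : ∀ᵐ x ∂ν, 0 < x := ae_iff.2 <| measure_mono_null (fun _ ↦ not_lt.1) hν0
  have hν_nonneg : ∀ᵐ x ∂ν, 0 ≤ x := hν_pos.mono fun _ ↦ le_of_lt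
  have hmin : Integrable (fun x ↦ min x 1) ν :=
    ⟨by fun_prop, (hasFiniteIntegral_iff_ofReal (hν_pos.mono fun x hx ↦ by positivity)).2 hνint⟩
  have : SigmaFinite ν := sigmaFinite_of_lintegral_ne_top (by fun_prop)
    (hν_pos.mono fun x hx ↦ by simpa using lt_min hx one_pos) hνint.ne
  have hlaplace : H.withDensity (fun x ↦ ENNReal.ofReal x)
      = ENNReal.ofReal a • V + V ∗ ν.withDensity (fun y ↦ ENNReal.ofReal y) := by
    refine Measure.ext_of_lintegral_exp_neg_mul_eq (fun l hl ↦ ?_) (fun l hl ↦ ?_)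
    · rw [lintegral_withDensity_ofReal_id (by fun_prop) fun _ ↦ exp_nonneg _, hH l hl]
      exact ENNReal.ofReal_ne_top
    · set I := ∫ x, x * exp (-(l * x)) ∂ν
      have hI : 0 ≤ I := integral_nonneg_of_ae (hν_nonneg.mono fun x hx ↦ by positivity)
      have hlI : ∫⁻ x, ENNReal.ofReal (x * exp (-(l * x))) ∂ν = ENNReal.ofReal I :=
        (ofReal_integral_eq_lintegral_ofReal
          (hasDerivAt_integral_one_sub_exp_neg_mul hν_nonneg hmin hl).1
          (hν_nonneg.mono fun x hx ↦ by positivity)).symm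
      rw [lintegral_withDensity_ofReal_id (by fun_prop) fun _ ↦ exp_nonneg _, hH l hl,
        (hasDerivAt_bernstein_of_eq hν_nonneg hmin hφ hl).deriv, lintegral_add_measure,
        lintegral_smul_measure, Measure.lintegral_exp_neg_mul_conv, hV l hl,
        lintegral_withDensity_ofReal_id (by fun_prop) fun _ ↦ exp_nonneg _, hlI,
        div_eq_mul_one_div, ENNReal.ofReal_mul (add_nonneg ha hI), ENNReal.ofReal_add ha hI,
        smul_eq_mul]
      ring
  rw [hlaplace, Measure.add_apply, Measure.smul_apply, smul_eq_mul,
    Measure.conv_withDensity_ofReal_id_apply _ _ hA]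

/-- for every Borel `A ⊆ (0,∞)`,
`∫_A x H(dx) = a V(A) + ∬ 1_A(x+y) y Π(dy) V(dx)`; i.e. on `(0,∞)` the measure
`x H(dx)` is `a V(dx)` plus the convolution of `y Π(dy)` with `V`. -/
theorem stmt15
    (q a : ℝ) (hq : 0 ≤ q) (ha : 0 ≤ a)
    (ν : Measure ℝ) (hν0 : ν (Set.Iic 0) = 0)
    (hνint : ∫⁻ x, ENNReal.ofReal (min x 1) ∂ν < ⊤)
    (hnz : ¬(q = 0 ∧ a = 0 ∧ ν = 0))
    (φ : ℝ → ℝ)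
    (hφ : ∀ l : ℝ, 0 ≤ l → φ l = q + a * l + ∫ x, (1 - Real.exp (-(l * x))) ∂ν)
    (hφpos : ∀ l : ℝ, 0 < l → 0 < φ l)
    (hφdiff : ∀ l : ℝ, 0 < l → DifferentiableAt ℝ φ l)
    (V : Measure ℝ) (hV0 : V (Set.Iio 0) = 0)
    (hV : ∀ l : ℝ, 0 < l →
      ∫⁻ x, ENNReal.ofReal (Real.exp (-(l * x))) ∂V = ENNReal.ofReal (1 / φ l))
    (H : Measure ℝ) (hH0 : H (Set.Iic 0) = 0)
    (hH : ∀ l : ℝ, 0 < l →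
      ∫⁻ x, ENNReal.ofReal (x * Real.exp (-(l * x))) ∂H
        = ENNReal.ofReal (deriv φ l / φ l)) :
    ∀ A : Set ℝ, MeasurableSet A → A ⊆ Set.Ioi 0 →
      (H.withDensity fun x => ENNReal.ofReal x) A
        = ENNReal.ofReal a * V A +
          ∫⁻ x, ∫⁻ y, A.indicator (fun _ => ENNReal.ofReal y) (x + y) ∂ν ∂V :=
  stmt15_general q a ha ν hν0 hνint φ hφ V hV H hH
end

section
/- For each α > 0 let V_α be the unique measure on [0,∞) satisfying ∫_[0,∞) e^{−λx} V_α(dx) = 1/(α + φ(λ)) for all λ > 0 (the α-resolvent measure, assumed to exist). Then for every Borel set A ⊆ (0,∞): H(A) = ∫_0^∞ V_α(A) dα. -/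
/-!
Differentiating `∫ e^{-λx} V_α(dx) = 1/(α + φ(λ))` in `λ` gives
`∫ x e^{-λx} V_α(dx) = φ'(λ)/(α + φ(λ))²`, and integrating over `α ∈ (0,∞)` turns the right-hand
side into `φ'(λ)/φ(λ)`. So `x H(dx)` and `x ∫_0^∞ V_α(dx) dα` have the same Laplace transform, hence
coincide, and dividing by `x` gives the claim on `(0,∞)`. The integral over `α` makes sense because
`α ↦ V_α(A)` is antitone, by the resolvent equation `V_α = V_β + (β - α) V_α ∗ V_β`.

Laplace transforms determine measures: after tilting by `e^{-x}`, the complex moment generating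
function is analytic on the half-plane `Re z < 1`, so it is determined by its values on the real
axis, and on the imaginary axis it is the characteristic function.
-/

open MeasureTheory ProbabilityTheory Real Set Filter Topology
open scoped ENNReal

noncomputable section

theorem lintegral_exp_mul_withDensity_exp_neg (μ : Measure ℝ) (t : ℝ) :
    ∫⁻ x, ENNReal.ofReal (exp (t * x)) ∂μ.withDensity (fun x ↦ ENNReal.ofReal (exp (-x)))
      = ∫⁻ x, ENNReal.ofReal (exp (-((1 - t) * x))) ∂μ := by
  rw [lintegral_withDensity_eq_lintegral_mul _ (by fun_prop) (by fun_prop)]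
  congr 1 with x
  rw [Pi.mul_apply, ← ENNReal.ofReal_mul (exp_nonneg _), ← exp_add]
  ring_nf

theorem mgf_withDensity_exp_neg (μ : Measure ℝ) (t : ℝ) :
    mgf id (μ.withDensity (fun x ↦ ENNReal.ofReal (exp (-x)))) t
      = (∫⁻ x, ENNReal.ofReal (exp (-((1 - t) * x))) ∂μ).toReal := by
  rw [mgf, integral_eq_lintegral_of_nonneg_ae (ae_of_all _ fun _ ↦ (exp_pos _).le)
    (by fun_prop), ← lintegral_exp_mul_withDensity_exp_neg]
  rfl

theorem Iio_one_subset_integrableExpSet_withDensity_exp_neg {μ : Measure ℝ}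
    (hμ : ∀ l, 0 < l → ∫⁻ x, ENNReal.ofReal (exp (-(l * x))) ∂μ ≠ ∞) :
    Iio 1 ⊆ integrableExpSet id (μ.withDensity (fun x ↦ ENNReal.ofReal (exp (-x)))) :=
  fun t ht ↦ by
    refine ⟨by fun_prop, ?_⟩
    rw [hasFiniteIntegral_iff_ofReal (ae_of_all _ fun _ ↦ (exp_pos _).le)]
    simpa [lintegral_exp_mul_withDensity_exp_neg] using (hμ _ (sub_pos.2 ht)).lt_top

theorem Measure.ext_of_lintegral_exp_neg_mul {μ ρ : Measure ℝ}
    (hμ : ∀ l, 0 < l → ∫⁻ x, ENNReal.ofReal (exp (-(l * x))) ∂μ ≠ ∞)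
    (h : ∀ l, 0 < l → ∫⁻ x, ENNReal.ofReal (exp (-(l * x))) ∂μ
      = ∫⁻ x, ENNReal.ofReal (exp (-(l * x))) ∂ρ) :
    μ = ρ := by
  have hρ : ∀ l, 0 < l → ∫⁻ x, ENNReal.ofReal (exp (-(l * x))) ∂ρ ≠ ∞ :=
    fun l hl ↦ h l hl ▸ hμ l hl
  set w : ℝ → ℝ≥0∞ := fun x ↦ ENNReal.ofReal (exp (-x))
  have hfinite : ∀ ν : Measure ℝ, (∀ l, 0 < l → ∫⁻ x, ENNReal.ofReal (exp (-(l * x))) ∂ν ≠ ∞) →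
      IsFiniteMeasure (ν.withDensity w) := fun ν hν ↦
    ⟨by simpa [w] using (hν 1 one_pos).lt_top⟩
  have := hfinite μ hμ
  have := hfinite ρ hρ
  have hanalytic : ∀ ν : Measure ℝ,
      (∀ l, 0 < l → ∫⁻ x, ENNReal.ofReal (exp (-(l * x))) ∂ν ≠ ∞) →
      AnalyticOnNhd ℂ (complexMGF id (ν.withDensity w)) {z | z.re < 1} := fun ν hν ↦
    analyticOnNhd_complexMGF.mono fun z hz ↦
      interior_maximal (Iio_one_subset_integrableExpSet_withDensity_exp_neg hν) isOpen_Iio hz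
  have hreal : ∃ᶠ t : ℝ in 𝓝[≠] 0,
      complexMGF id (μ.withDensity w) t = complexMGF id (ρ.withDensity w) t := by
    refine (eventually_nhdsWithin_of_eventually_nhds (gt_mem_nhds one_pos)).frequently.mono ?_
    intro t ht
    rw [complexMGF_ofReal, complexMGF_ofReal, mgf_withDensity_exp_neg, mgf_withDensity_exp_neg,
      h _ (sub_pos.2 ht)]
  have hstrip := (hanalytic μ hμ).eqOn_of_preconnected_of_frequently_eq (hanalytic ρ hρ)
    (convex_halfSpace_re_lt 1).isPreconnected (by simp)
    ((Complex.continuous_ofReal.continuousWithinAt.tendsto_nhdsWithin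
      fun x hx ↦ by simpa using hx).frequently hreal)
  have htilt : μ.withDensity w = ρ.withDensity w := Measure.ext_of_charFun <| funext fun t ↦ by
    rw [← complexMGF_id_mul_I, ← complexMGF_id_mul_I, hstrip (by simp)]
  have hw : ∀ x, w x ≠ 0 := fun x ↦ by simp [w, exp_pos]
  rw [← withDensity_inv_same (μ := μ) (f := w) (by fun_prop) (ae_of_all _ hw) (by simp [w]),
    ← withDensity_inv_same (μ := ρ) (f := w) (by fun_prop) (ae_of_all _ hw) (by simp [w]), htilt]

theorem measure_univ_le_of_lintegral_exp_neg_mul_le {μ : Measure ℝ} {c : ℝ≥0∞}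
    (h : ∀ l, 0 < l → ∫⁻ x, ENNReal.ofReal (exp (-(l * x))) ∂μ ≤ c) : μ univ ≤ c := by
  set f : ℕ → ℝ → ℝ≥0∞ := fun n x ↦ ENNReal.ofReal (exp (-(1 / ((n : ℝ) + 1) * x)))
  have hf : ∀ x, Tendsto (fun n ↦ f n x) atTop (𝓝 1) := fun x ↦ by
    have : Tendsto (fun n : ℕ ↦ -(1 / ((n : ℝ) + 1) * x)) atTop (𝓝 0) := by
      simpa using (tendsto_one_div_add_atTop_nhds_zero_nat.mul_const x).neg
    simpa [f] using ENNReal.tendsto_ofReal ((continuous_exp.tendsto 0).comp this)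
  calc μ univ = ∫⁻ x, liminf (fun n ↦ f n x) atTop ∂μ := by simp [(hf _).liminf_eq]
    _ ≤ liminf (fun n ↦ ∫⁻ x, f n x ∂μ) atTop := lintegral_liminf_le fun n ↦ by fun_prop
    _ ≤ c := liminf_le_of_le (by isBoundedDefault) fun b hb ↦
        hb.exists_forall_of_atTop.elim fun N hN ↦ (hN N le_rfl).trans (h _ (by positivity))

theorem lintegral_exp_neg_mul_conv (μ ν : Measure ℝ) [SFinite ν] (l : ℝ) :
    ∫⁻ x, ENNReal.ofReal (exp (-(l * x))) ∂(μ ∗ ν)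
      = (∫⁻ x, ENNReal.ofReal (exp (-(l * x))) ∂μ) *
        ∫⁻ x, ENNReal.ofReal (exp (-(l * x))) ∂ν := by
  rw [Measure.lintegral_conv (by fun_prop), ← lintegral_mul_const _ (by fun_prop)]
  congr 1 with x
  rw [← lintegral_const_mul _ (by fun_prop)]
  congr 1 with y
  rw [← ENNReal.ofReal_mul (exp_nonneg _), ← exp_add]
  ring_nf

theorem lintegral_exp_neg_mul_withDensity_ofReal (μ : Measure ℝ) (l : ℝ) :
    ∫⁻ x, ENNReal.ofReal (exp (-(l * x))) ∂μ.withDensity (fun x ↦ ENNReal.ofReal x)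
      = ∫⁻ x, ENNReal.ofReal (x * exp (-(l * x))) ∂μ := by
  rw [lintegral_withDensity_eq_lintegral_mul _ (by fun_prop) (by fun_prop)]
  simp only [Pi.mul_apply, ENNReal.ofReal_mul' (exp_pos _).le]

theorem Measure.restrict_Ioi_eq_of_withDensity_ofReal_eq {μ ν : Measure ℝ}
    (h : μ.withDensity (fun x ↦ ENNReal.ofReal x) = ν.withDensity (fun x ↦ ENNReal.ofReal x)) :
    μ.restrict (Ioi 0) = ν.restrict (Ioi 0) := by
  have hdiv : ∀ ρ : Measure ℝ, ρ.restrict (Ioi 0) =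
      ((ρ.withDensity fun x ↦ ENNReal.ofReal x).restrict (Ioi 0)).withDensity
        fun x ↦ (ENNReal.ofReal x)⁻¹ := fun ρ ↦ by
    rw [restrict_withDensity measurableSet_Ioi, withDensity_inv_same (by fun_prop)
      (ae_restrict_of_forall_mem measurableSet_Ioi fun x hx ↦ by simpa using hx) (by simp)]
  rw [hdiv μ, hdiv ν, h]

section LaplaceDeriv

variable {V : Measure ℝ} {F : ℝ → ℝ} {F' l : ℝ}

theorem neg_mem_interior_integrableExpSet
    (hV : ∀ u, 0 < u → ∫⁻ x, ENNReal.ofReal (exp (-(u * x))) ∂V ≠ ∞) (hl : 0 < l) :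
    -l ∈ interior (integrableExpSet id V) := by
  have hIio : Iio 0 ⊆ integrableExpSet id V := fun t ht ↦ by
    refine ⟨by fun_prop, ?_⟩
    rw [hasFiniteIntegral_iff_ofReal (ae_of_all _ fun _ ↦ (exp_pos _).le)]
    simpa [neg_mul] using (hV (-t) (neg_pos.2 ht)).lt_top
  exact interior_maximal hIio isOpen_Iio (neg_neg_of_pos hl)

theorem integral_mul_exp_neg_mul_eq_neg_deriv (hl : 0 < l)
    (hF : ∀ u, 0 < u → ∫⁻ x, ENNReal.ofReal (exp (-(u * x))) ∂V = ENNReal.ofReal (F u))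
    (hF0 : ∀ u, 0 < u → 0 ≤ F u) (hd : HasDerivAt F F' l) :
    ∫ x, x * exp (-(l * x)) ∂V = -F' := by
  have hint := neg_mem_interior_integrableExpSet (fun u hu ↦ hF u hu ▸ ENNReal.ofReal_ne_top) hl
  have hmgf : (fun u ↦ mgf id V (-u)) =ᶠ[𝓝 l] F := by
    filter_upwards [Ioi_mem_nhds hl] with u hu
    rw [mgf, integral_eq_lintegral_of_nonneg_ae (ae_of_all _ fun _ ↦ (exp_pos _).le)
      (by fun_prop)]
    simp only [id_eq, neg_mul]
    rw [hF u hu, ENNReal.toReal_ofReal (hF0 u hu)]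
  have := ((hasDerivAt_mgf hint).comp l (hasDerivAt_neg l)).congr_of_eventuallyEq hmgf.symm
  simp only [id_eq, neg_mul, mul_neg, mul_one] at this
  rw [← this.unique hd, neg_neg]

theorem lintegral_mul_exp_neg_mul_eq_neg_deriv (hl : 0 < l) (hV : ∀ᵐ x ∂V, 0 ≤ x)
    (hF : ∀ u, 0 < u → ∫⁻ x, ENNReal.ofReal (exp (-(u * x))) ∂V = ENNReal.ofReal (F u))
    (hF0 : ∀ u, 0 < u → 0 ≤ F u) (hd : HasDerivAt F F' l) :
    ∫⁻ x, ENNReal.ofReal (x * exp (-(l * x))) ∂V = ENNReal.ofReal (-F') := by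
  have hint : Integrable (fun x ↦ x * exp (-(l * x))) V := by
    simpa [neg_mul] using integrable_pow_mul_exp_of_mem_interior_integrableExpSet
      (neg_mem_interior_integrableExpSet (fun u hu ↦ hF u hu ▸ ENNReal.ofReal_ne_top) hl) 1
  rw [← ofReal_integral_eq_lintegral_ofReal hint
    (by filter_upwards [hV] with x hx using mul_nonneg hx (exp_pos _).le),
    integral_mul_exp_neg_mul_eq_neg_deriv hl hF hF0 hd]

end LaplaceDeriv

theorem lintegral_Ioi_inv_add_sq {c : ℝ} (hc : 0 < c) :
    ∫⁻ α in Ioi 0, ENNReal.ofReal ((α + c) ^ 2)⁻¹ = ENNReal.ofReal c⁻¹ := by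
  have hderiv : ∀ α ∈ Ici (0 : ℝ), HasDerivAt (fun α ↦ -(α + c)⁻¹) ((α + c) ^ 2)⁻¹ α :=
    fun α hα ↦ (((hasDerivAt_id' α).add_const c).fun_inv
      (by linarith [mem_Ici.1 hα])).fun_neg.congr_deriv (by ring)
  have hpos : ∀ α ∈ Ioi (0 : ℝ), 0 ≤ ((α + c) ^ 2)⁻¹ := fun _ _ ↦ by positivity
  have hlim : Tendsto (fun α ↦ -(α + c)⁻¹) atTop (𝓝 (-0)) :=
    (tendsto_atTop_add_const_right _ c tendsto_id).inv_tendsto_atTop.neg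
  rw [← ofReal_integral_eq_lintegral_ofReal (integrableOn_Ioi_deriv_of_nonneg' hderiv hpos hlim)
    (ae_restrict_of_forall_mem measurableSet_Ioi hpos),
    integral_Ioi_of_hasDerivAt_of_nonneg' hderiv hpos hlim]
  simp

/-- The measure `∫_0^∞ V α dα`. -/
def mixtureIoi (V : ℝ → Measure ℝ) : Measure ℝ :=
  (volume.comap ((↑) : Ioi (0 : ℝ) → ℝ)).bind fun α ↦ V α

theorem mixtureIoi_apply {V : ℝ → Measure ℝ} (hV : Measurable fun α : Ioi (0 : ℝ) ↦ V α)
    {s : Set ℝ} (hs : MeasurableSet s) : mixtureIoi V s = ∫⁻ α in Ioi 0, V α s := by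
  rw [mixtureIoi, Measure.bind_apply hs hV.aemeasurable,
    lintegral_subtype_comap measurableSet_Ioi (fun α ↦ V α s)]

theorem lintegral_mixtureIoi {V : ℝ → Measure ℝ} (hV : Measurable fun α : Ioi (0 : ℝ) ↦ V α)
    {f : ℝ → ℝ≥0∞} (hf : Measurable f) :
    ∫⁻ x, f x ∂mixtureIoi V = ∫⁻ α in Ioi 0, ∫⁻ x, f x ∂V α := by
  rw [mixtureIoi, Measure.lintegral_bind hV.aemeasurable hf.aemeasurable,
    lintegral_subtype_comap measurableSet_Ioi (fun α ↦ ∫⁻ x, f x ∂V α)]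

def IsResolventFamily (φ : ℝ → ℝ) (V : ℝ → Measure ℝ) : Prop :=
  ∀ α, 0 < α → ∀ l, 0 < l →
    ∫⁻ x, ENNReal.ofReal (exp (-(l * x))) ∂(V α) = ENNReal.ofReal (1 / (α + φ l))

namespace IsResolventFamily

variable {φ : ℝ → ℝ} {V : ℝ → Measure ℝ}

theorem isFiniteMeasure (hV : IsResolventFamily φ V) (hφ : ∀ l, 0 < l → 0 < φ l)
    {α : ℝ} (hα : 0 < α) : IsFiniteMeasure (V α) := by
  refine ⟨(measure_univ_le_of_lintegral_exp_neg_mul_le (c := ENNReal.ofReal (1 / α))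
    fun l hl ↦ ?_).trans_lt ENNReal.ofReal_lt_top⟩
  rw [hV α hα l hl]
  gcongr
  linarith [hφ l hl]

theorem eq_add_smul_conv (hV : IsResolventFamily φ V) (hφ : ∀ l, 0 < l → 0 < φ l)
    {α β : ℝ} (hα : 0 < α) (hαβ : α ≤ β) :
    V α = V β + ENNReal.ofReal (β - α) • (V α ∗ V β) := by
  have hβ := hα.trans_le hαβ
  have := hV.isFiniteMeasure hφ hβ
  refine Measure.ext_of_lintegral_exp_neg_mul (fun l hl ↦ hV α hα l hl ▸ ENNReal.ofReal_ne_top)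
    fun l hl ↦ ?_
  have hαl : 0 < α + φ l := by linarith [hφ l hl]
  have hβl : 0 < β + φ l := by linarith [hφ l hl]
  rw [lintegral_add_measure, lintegral_smul_measure, lintegral_exp_neg_mul_conv, hV α hα l hl,
    hV β hβ l hl, smul_eq_mul, ← ENNReal.ofReal_mul (by positivity),
    ← ENNReal.ofReal_mul (by linarith),
    ← ENNReal.ofReal_add (by positivity) (mul_nonneg (sub_nonneg.2 hαβ) (by positivity))]
  congr 1
  field_simp
  ring

theorem measurable (hV : IsResolventFamily φ V) (hφ : ∀ l, 0 < l → 0 < φ l) :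
    Measurable fun α : Ioi (0 : ℝ) ↦ V α :=
  Measure.measurable_of_measurable_coe _ fun s _ ↦ Antitone.measurable fun α _ hαβ ↦ by
    rw [hV.eq_add_smul_conv hφ α.2 hαβ, Measure.add_apply]
    exact le_self_add

theorem lintegral_mul_exp_neg_mul (hV : IsResolventFamily φ V) (hφ : ∀ l, 0 < l → 0 < φ l)
    (hV0 : ∀ α, 0 < α → V α (Iio 0) = 0) {α l : ℝ} (hα : 0 < α) (hl : 0 < l)
    (hφl : DifferentiableAt ℝ φ l) :
    ∫⁻ x, ENNReal.ofReal (x * exp (-(l * x))) ∂(V α)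
      = ENNReal.ofReal (deriv φ l / (α + φ l) ^ 2) := by
  have hd : HasDerivAt (fun u ↦ 1 / (α + φ u)) (-deriv φ l / (α + φ l) ^ 2) l := by
    simpa only [one_div] using
      (hφl.hasDerivAt.const_add α).fun_inv (by linarith [hφ l hl])
  have hnonneg : ∀ᵐ x ∂(V α), 0 ≤ x :=
    (measure_eq_zero_iff_ae_notMem.1 (hV0 α hα)).mono fun x hx ↦ by simpa using hx
  rw [lintegral_mul_exp_neg_mul_eq_neg_deriv hl hnonneg (hV α hα)
    (fun u hu ↦ by have := hφ u hu; positivity) hd, neg_div, neg_neg]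

theorem lintegral_mul_exp_neg_mul_mixtureIoi (hV : IsResolventFamily φ V)
    (hφ : ∀ l, 0 < l → 0 < φ l) (hV0 : ∀ α, 0 < α → V α (Iio 0) = 0) {l : ℝ} (hl : 0 < l)
    (hφl : DifferentiableAt ℝ φ l) :
    ∫⁻ x, ENNReal.ofReal (x * exp (-(l * x))) ∂mixtureIoi V
      = ENNReal.ofReal (deriv φ l / φ l) := by
  calc ∫⁻ x, ENNReal.ofReal (x * exp (-(l * x))) ∂mixtureIoi V
      = ∫⁻ α in Ioi 0, ENNReal.ofReal (deriv φ l) * ENNReal.ofReal ((α + φ l) ^ 2)⁻¹ := by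
        rw [lintegral_mixtureIoi (hV.measurable hφ) (by fun_prop)]
        refine setLIntegral_congr_fun measurableSet_Ioi fun α hα ↦ ?_
        rw [hV.lintegral_mul_exp_neg_mul hφ hV0 hα hl hφl, div_eq_mul_inv,
          ENNReal.ofReal_mul' (by positivity)]
    _ = ENNReal.ofReal (deriv φ l / φ l) := by
        rw [lintegral_const_mul _ (by fun_prop), lintegral_Ioi_inv_add_sq (hφ l hl),
          ← ENNReal.ofReal_mul' (by have := hφ l hl; positivity), div_eq_mul_inv]

end IsResolventFamily

theorem stmt16_general
    (φ : ℝ → ℝ)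
    (hφpos : ∀ l : ℝ, 0 < l → 0 < φ l)
    (hφdiff : ∀ l : ℝ, 0 < l → DifferentiableAt ℝ φ l)
    (H : Measure ℝ)
    (hH : ∀ l : ℝ, 0 < l →
      ∫⁻ x, ENNReal.ofReal (x * Real.exp (-(l * x))) ∂H
        = ENNReal.ofReal (deriv φ l / φ l))
    (Vα : ℝ → Measure ℝ)
    (hVα0 : ∀ α : ℝ, 0 < α → Vα α (Set.Iio 0) = 0)
    (hVα : ∀ α : ℝ, 0 < α → ∀ l : ℝ, 0 < l →
      ∫⁻ x, ENNReal.ofReal (Real.exp (-(l * x))) ∂(Vα α)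
        = ENNReal.ofReal (1 / (α + φ l))) :
    ∀ A : Set ℝ, MeasurableSet A → A ⊆ Set.Ioi 0 →
      H A = ∫⁻ α in Set.Ioi (0 : ℝ), Vα α A := by
  intro A hA hA0
  have hxH : H.withDensity (fun x ↦ ENNReal.ofReal x)
      = (mixtureIoi Vα).withDensity (fun x ↦ ENNReal.ofReal x) := by
    refine Measure.ext_of_lintegral_exp_neg_mul (fun l hl ↦ ?_) fun l hl ↦ ?_
    · simp [lintegral_exp_neg_mul_withDensity_ofReal, hH l hl]
    · simp only [lintegral_exp_neg_mul_withDensity_ofReal, hH l hl,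
        IsResolventFamily.lintegral_mul_exp_neg_mul_mixtureIoi hVα hφpos hVα0 hl (hφdiff l hl)]
  calc H A = H.restrict (Ioi 0) A := (Measure.restrict_eq_self _ hA0).symm
    _ = (mixtureIoi Vα).restrict (Ioi 0) A := by
        rw [Measure.restrict_Ioi_eq_of_withDensity_ofReal_eq hxH]
    _ = ∫⁻ α in Ioi 0, Vα α A := by
        rw [Measure.restrict_eq_self _ hA0,
          mixtureIoi_apply (IsResolventFamily.measurable hVα hφpos) hA]

/-- with `V_α` the `α`-resolvent measures
(`∫ e^{-λx} V_α(dx) = 1/(α+φ(λ))`), for every Borel `A ⊆ (0,∞)` one has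
`H(A) = ∫_0^∞ V_α(A) dα`. -/
theorem stmt16
    (q a : ℝ) (hq : 0 ≤ q) (ha : 0 ≤ a)
    (ν : Measure ℝ) (hν0 : ν (Set.Iic 0) = 0)
    (hνint : ∫⁻ x, ENNReal.ofReal (min x 1) ∂ν < ⊤)
    (hnz : ¬(q = 0 ∧ a = 0 ∧ ν = 0))
    (φ : ℝ → ℝ)
    (hφ : ∀ l : ℝ, 0 ≤ l → φ l = q + a * l + ∫ x, (1 - Real.exp (-(l * x))) ∂ν)
    (hφpos : ∀ l : ℝ, 0 < l → 0 < φ l)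
    (hφdiff : ∀ l : ℝ, 0 < l → DifferentiableAt ℝ φ l)
    (H : Measure ℝ) (hH0 : H (Set.Iic 0) = 0)
    (hH : ∀ l : ℝ, 0 < l →
      ∫⁻ x, ENNReal.ofReal (x * Real.exp (-(l * x))) ∂H
        = ENNReal.ofReal (deriv φ l / φ l))
    (Vα : ℝ → Measure ℝ)
    (hVα0 : ∀ α : ℝ, 0 < α → Vα α (Set.Iio 0) = 0)
    (hVα : ∀ α : ℝ, 0 < α → ∀ l : ℝ, 0 < l →
      ∫⁻ x, ENNReal.ofReal (Real.exp (-(l * x))) ∂(Vα α)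
        = ENNReal.ofReal (1 / (α + φ l))) :
    ∀ A : Set ℝ, MeasurableSet A → A ⊆ Set.Ioi 0 →
      H A = ∫⁻ α in Set.Ioi (0 : ℝ), Vα α A :=
  stmt16_general φ hφpos hφdiff H hH Vα hVα0 hVα
end
end
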